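/- Let r₁, r₂, r' ∈ (1,∞] satisfy 1/r₁ + 1/r₂ + 1/r' = 1 and suppose 1/r₁ ≤ 1/2, 1/r₂ ≤ 1/2, and 1/r' ≤ 1/2 (the local L² case). Then there exist θ₁, θ₂, θ₃ with 0 ≤ θ_j < 1, θ₁ + θ₂ + θ₃ = 1, such that (1+θ_j)/2 > 1/r_j for j = 1,2 and (1+θ₃)/2 > 1/r', and moreover for any (p,q,s) with 1/p + 1/q = 1/s, 1 < p, q ≤ ∞, 2/3 < s < ∞, the θ_j may additionally be chosen so that 1/p + 1/q + (1+θ₃)/2 > 1, 1/p ≤ (1+θ₁)/2, and 1/q ≤ (1+θ₂)/2. -/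
import Mathlib


open scoped ENNReal

/-- Local `L²` case of the exponent arithmetic for vector-valued BHT (Theorem 1.7(i)):
if `1/r₁ + 1/r₂ + 1/r' = 1` with each reciprocal at most `1/2`, then for every `(p,q,s)` in
the range of `BHT` one can choose interpolation parameters `θⱼ ∈ [0,1)` summing to `1` with
`(1+θⱼ)/2 > 1/rⱼ`, `(1+θ₃)/2 > 1/r'`, `1/p + 1/q + (1+θ₃)/2 > 1`, `1/p ≤ (1+θ₁)/2`, and
`1/q ≤ (1+θ₂)/2`. -/
theorem stmt_9 (r₁ r₂ r' : ℝ≥0∞) (h₁ : 1 < r₁) (h₂ : 1 < r₂) (h₃ : 1 < r')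
    (hsum : r₁⁻¹ + r₂⁻¹ + r'⁻¹ = 1)
    (hl₁ : r₁⁻¹ ≤ 1 / 2) (hl₂ : r₂⁻¹ ≤ 1 / 2) (hl₃ : r'⁻¹ ≤ 1 / 2)
    (p q s : ℝ≥0∞) (hp : 1 < p) (hq : 1 < q) (hs₁ : 2 / 3 < s) (hs₂ : s < ⊤)
    (hpq : p⁻¹ + q⁻¹ = s⁻¹) :
    ∃ θ₁ θ₂ θ₃ : ℝ, 0 ≤ θ₁ ∧ 0 ≤ θ₂ ∧ 0 ≤ θ₃ ∧ θ₁ < 1 ∧ θ₂ < 1 ∧ θ₃ < 1 ∧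
      θ₁ + θ₂ + θ₃ = 1 ∧
      r₁⁻¹ < ENNReal.ofReal ((1 + θ₁) / 2) ∧
      r₂⁻¹ < ENNReal.ofReal ((1 + θ₂) / 2) ∧
      r'⁻¹ < ENNReal.ofReal ((1 + θ₃) / 2) ∧
      1 < p⁻¹ + q⁻¹ + ENNReal.ofReal ((1 + θ₃) / 2) ∧
      p⁻¹ ≤ ENNReal.ofReal ((1 + θ₁) / 2) ∧
      q⁻¹ ≤ ENNReal.ofReal ((1 + θ₂) / 2) := by
  -- real-valued reciprocals of p and q
  set A : ℝ := (p⁻¹).toReal with hA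
  set B : ℝ := (q⁻¹).toReal with hB
  have hpne : p ≠ 0 := fun h => by simp [h] at hp
  have hqne : q ≠ 0 := fun h => by simp [h] at hq
  have hpinv_top : p⁻¹ ≠ ⊤ := ENNReal.inv_ne_top.mpr hpne
  have hqinv_top : q⁻¹ ≠ ⊤ := ENNReal.inv_ne_top.mpr hqne
  have hpA : p⁻¹ = ENNReal.ofReal A := (ENNReal.ofReal_toReal hpinv_top).symm
  have hqB : q⁻¹ = ENNReal.ofReal B := (ENNReal.ofReal_toReal hqinv_top).symm
  have hA0 : 0 ≤ A := ENNReal.toReal_nonneg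
  have hB0 : 0 ≤ B := ENNReal.toReal_nonneg
  have hpinv1 : p⁻¹ < 1 := ENNReal.inv_lt_one.mpr hp
  have hqinv1 : q⁻¹ < 1 := ENNReal.inv_lt_one.mpr hq
  have hA1 : A < 1 := by
    have h := (ENNReal.toReal_lt_toReal hpinv_top ENNReal.one_ne_top).mpr hpinv1
    rw [ENNReal.toReal_one] at h
    exact h
  have hB1 : B < 1 := by
    have h := (ENNReal.toReal_lt_toReal hqinv_top ENNReal.one_ne_top).mpr hqinv1
    rw [ENNReal.toReal_one] at h
    exact h
  have hsne : s ≠ 0 := fun h => by simp [h] at hs₁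
  have hsinv_top : s⁻¹ ≠ ⊤ := ENNReal.inv_ne_top.mpr hsne
  have hABs : A + B = (s⁻¹).toReal := by
    rw [hA, hB, ← ENNReal.toReal_add hpinv_top hqinv_top, hpq]
  have hABpos : 0 < A + B := by
    rw [hABs]
    exact ENNReal.toReal_pos (ENNReal.inv_ne_zero.mpr hs₂.ne) hsinv_top
  have hsinv : s⁻¹ < 3 / 2 := by
    have : (2 / 3 : ℝ≥0∞)⁻¹ = 3 / 2 := by
      rw [ENNReal.inv_div (by norm_num) (by norm_num)]
    rw [← this]
    exact ENNReal.inv_lt_inv' hs₁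
  have hAB32 : A + B < 3 / 2 := by
    rw [hABs]
    have := ENNReal.toReal_lt_toReal hsinv_top ((ENNReal.div_lt_top (by norm_num) (by norm_num)).ne : (3/2 : ℝ≥0∞) ≠ ⊤) |>.mpr hsinv
    calc (s⁻¹).toReal < ((3:ℝ≥0∞)/2).toReal := this
      _ = 3 / 2 := by norm_num
  -- lower bounds for the θ's
  set L₁ : ℝ := max (2 * A - 1) 0 with hL₁
  set L₂ : ℝ := max (2 * B - 1) 0 with hL₂
  set L₃ : ℝ := max (1 - 2 * (A + B)) 0 with hL₃
  have hL₁0 : 0 ≤ L₁ := le_max_right _ _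
  have hL₂0 : 0 ≤ L₂ := le_max_right _ _
  have hL₃0 : 0 ≤ L₃ := le_max_right _ _
  have hL₁A : 2 * A - 1 ≤ L₁ := le_max_left _ _
  have hL₂B : 2 * B - 1 ≤ L₂ := le_max_left _ _
  have hL₃AB : 1 - 2 * (A + B) ≤ L₃ := le_max_left _ _
  have hL₁1 : L₁ < 1 := by rw [hL₁]; rcases max_cases (2 * A - 1) 0 with ⟨e, _⟩ | ⟨e, _⟩ <;>
    rw [e] <;> linarith
  have hL₂1 : L₂ < 1 := by rw [hL₂]; rcases max_cases (2 * B - 1) 0 with ⟨e, _⟩ | ⟨e, _⟩ <;>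
    rw [e] <;> linarith
  have hL₃1 : L₃ < 1 := by rw [hL₃]; rcases max_cases (1 - 2 * (A + B)) 0 with ⟨e, _⟩ | ⟨e, _⟩ <;>
    rw [e] <;> linarith
  have hS : L₁ + L₂ + L₃ < 1 := by
    rw [hL₁, hL₂, hL₃]
    rcases max_cases (2 * A - 1) 0 with ⟨e1, i1⟩ | ⟨e1, i1⟩ <;>
      rcases max_cases (2 * B - 1) 0 with ⟨e2, i2⟩ | ⟨e2, i2⟩ <;>
      rcases max_cases (1 - 2 * (A + B)) 0 with ⟨e3, i3⟩ | ⟨e3, i3⟩ <;>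
      rw [e1, e2, e3] <;> linarith
  set ε : ℝ := (1 - (L₁ + L₂ + L₃)) / 3 with hε
  have hεpos : 0 < ε := by rw [hε]; linarith
  refine ⟨L₁ + ε, L₂ + ε, L₃ + ε, by linarith, by linarith, by linarith, ?_, ?_, ?_, ?_,
    ?_, ?_, ?_, ?_, ?_, ?_⟩
  · rw [hε]; linarith
  · rw [hε]; linarith
  · rw [hε]; linarith
  · rw [hε]; ring
  · refine lt_of_le_of_lt hl₁ ?_
    have : (1 / 2 : ℝ≥0∞) = ENNReal.ofReal (1 / 2) := by
      rw [ENNReal.ofReal_div_of_pos (by norm_num), ENNReal.ofReal_one, ENNReal.ofReal_ofNat]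
    rw [this]
    exact ENNReal.ofReal_lt_ofReal_iff (by linarith) |>.mpr (by linarith)
  · refine lt_of_le_of_lt hl₂ ?_
    have : (1 / 2 : ℝ≥0∞) = ENNReal.ofReal (1 / 2) := by
      rw [ENNReal.ofReal_div_of_pos (by norm_num), ENNReal.ofReal_one, ENNReal.ofReal_ofNat]
    rw [this]
    exact ENNReal.ofReal_lt_ofReal_iff (by linarith) |>.mpr (by linarith)
  · refine lt_of_le_of_lt hl₃ ?_
    have : (1 / 2 : ℝ≥0∞) = ENNReal.ofReal (1 / 2) := by
      rw [ENNReal.ofReal_div_of_pos (by norm_num), ENNReal.ofReal_one, ENNReal.ofReal_ofNat]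
    rw [this]
    exact ENNReal.ofReal_lt_ofReal_iff (by linarith) |>.mpr (by linarith)
  · rw [hpA, hqB, ← ENNReal.ofReal_add hA0 hB0,
      ← ENNReal.ofReal_add (by linarith) (by linarith)]
    have : (1 : ℝ≥0∞) = ENNReal.ofReal 1 := by norm_num
    rw [this]
    exact ENNReal.ofReal_lt_ofReal_iff (by linarith) |>.mpr (by linarith)
  · rw [hpA]
    exact ENNReal.ofReal_le_ofReal (by linarith)
  · rw [hqB]
    exact ENNReal.ofReal_le_ofReal (by linarith)
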